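/- arXiv:0809.4587 — 3 statements merged into one kernel-verified Lean document; each statement's English description precedes it below -/
import Mathlib

section
/- Let p ≥ 2 and 1 ≤ s < n be natural numbers, and let b be a natural number with p^s ∣ b, (p+1) ∣ b, b < p^n, and p^n − p^s − p^{s−1} ≤ b. Then b = p^n − p^s and n − s is even. -/
theorem stmt_7 (p s n b : ℕ) (hp : 2 ≤ p) (hs : 1 ≤ s) (hsn : s < n)
    (hdvd : p ^ s ∣ b) (hdvd' : (p + 1) ∣ b)
    (hlt : b < p ^ n) (hle : p ^ n - p ^ s - p ^ (s - 1) ≤ b) :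
    b = p ^ n - p ^ s ∧ Even (n - s) := by
  obtain ⟨k, rfl⟩ := hdvd
  have hp0 : 0 < p := by omega
  have hps1 : p ^ (s - 1) < p ^ s := Nat.pow_lt_pow_right (by omega) (by omega)
  have hps2 : p ^ s * 2 ≤ p ^ n := by
    calc p ^ s * 2 ≤ p ^ s * p := Nat.mul_le_mul_left _ hp
    _ = p ^ (s + 1) := by ring
    _ ≤ p ^ n := Nat.pow_le_pow_right (by omega) (by omega)
  -- k = p^(n-s) - 1
  have hkn : p ^ s * k < p ^ s * (p ^ (n - s)) := by
    rw [← pow_add]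
    have : s + (n - s) = n := by omega
    rw [this]; exact hlt
  have hklt : k < p ^ (n - s) := lt_of_mul_lt_mul_left hkn (Nat.zero_le _)
  have hk2 : p ^ (n - s) - 1 ≤ k := by
    by_contra h
    push_neg at h
    have hk' : p ^ s * k ≤ p ^ s * (p ^ (n - s) - 2) := by
      apply Nat.mul_le_mul_left
      omega
    have hpn : p ^ s * p ^ (n - s) = p ^ n := by
      rw [← pow_add]; congr 1; omega
    have h2 : 2 ≤ p ^ (n - s) := by
      calc 2 ≤ p := hp
      _ = p ^ 1 := (pow_one p).symm
      _ ≤ p ^ (n - s) := Nat.pow_le_pow_right (by omega) (by omega)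
    have : p ^ s * (p ^ (n - s) - 2) = p ^ n - p ^ s * 2 := by
      rw [Nat.mul_sub, hpn]
    omega
  have hk : k = p ^ (n - s) - 1 := by omega
  subst hk
  have h1 : 1 ≤ p ^ (n - s) := Nat.one_le_pow _ _ hp0
  have hb : p ^ s * (p ^ (n - s) - 1) = p ^ n - p ^ s := by
    rw [Nat.mul_sub, ← pow_add, mul_one]
    congr 2; omega
  refine ⟨hb, ?_⟩
  -- parity via ZMod (p+1)
  have hcop : Nat.Coprime (p + 1) (p ^ s) := by
    exact Nat.Coprime.pow_right _ (Nat.coprime_self_add_left.mpr (Nat.coprime_one_left p))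
  have hdvd2 : (p + 1) ∣ (p ^ (n - s) - 1) := by
    exact (Nat.Coprime.dvd_of_dvd_mul_left hcop hdvd')
  rcases Nat.even_or_odd (n - s) with h | h
  · exact h
  · exfalso
    have : ((p : ZMod (p + 1)) ^ (n - s) - 1) = 0 := by
      have hz : ((p ^ (n - s) - 1 : ℕ) : ZMod (p + 1)) = 0 :=
        (ZMod.natCast_eq_zero_iff _ _).mpr hdvd2
      rwa [Nat.cast_sub h1, Nat.cast_pow, Nat.cast_one] at hz
    have hpneg : (p : ZMod (p + 1)) = -1 := by
      have h0 : ((p + 1 : ℕ) : ZMod (p + 1)) = 0 := ZMod.natCast_self _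
      push_cast at h0
      linear_combination h0
    rw [hpneg, h.neg_one_pow] at this
    have h2 : ((2 : ℕ) : ZMod (p + 1)) = 0 := by push_cast; linear_combination -this
    have := (ZMod.natCast_eq_zero_iff 2 (p + 1)).mp h2
    have := Nat.le_of_dvd (by omega) this
    omega
end

section
/- Let p ≥ 3, n ≥ 2, s ≥ 1, a ≥ 1, b ≥ 1 be natural numbers such that p ∤ a, p^s ∣ b, b < p^n, b + p^s + p^{s−1} ≥ p^n, and b + a·p^s·(p+1) = p^n·(p+1). Then n − s is even and positive, b = p^n − p^s, and a·(p+1) = p^{n−s+1} + 1. -/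
theorem stmt_9 (p n s a b : ℕ) (hp : 3 ≤ p) (hn : 2 ≤ n) (hs : 1 ≤ s)
    (ha : 1 ≤ a) (hb : 1 ≤ b) (hpa : ¬ p ∣ a) (hdvd : p ^ s ∣ b)
    (hlt : b < p ^ n) (hge : p ^ n ≤ b + p ^ s + p ^ (s - 1))
    (hdeg : b + a * p ^ s * (p + 1) = p ^ n * (p + 1)) :
    Even (n - s) ∧ 0 < n - s ∧ b = p ^ n - p ^ s ∧
      a * (p + 1) = p ^ (n - s + 1) + 1 := by
  have hp1 : 1 < p := by omega
  have h1 : a * p ^ s * (p + 1) < p ^ n * (p + 1) := by omega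
  have h2 : a * p ^ s < p ^ n := lt_of_mul_lt_mul_right h1 (Nat.zero_le _)
  have hsn : s < n := by
    have hle : p ^ s ≤ a * p ^ s := Nat.le_mul_of_pos_left _ ha
    exact (Nat.pow_lt_pow_iff_right hp1).mp (lt_of_le_of_lt hle h2)
  set m := n - s with hm
  have hmn : n = s + m := by omega
  have hm1 : 1 ≤ m := by omega
  have hpow : p ^ n = p ^ s * p ^ m := by rw [hmn, pow_add]
  obtain ⟨t, ht⟩ : p ^ s ∣ (p ^ n - a * p ^ s) :=
    Nat.dvd_sub (pow_dvd_pow p hsn.le) (Dvd.intro_left a rfl)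
  have hc : a * p ^ s + p ^ s * t = p ^ n := by omega
  have hb' : b = p ^ s * t * (p + 1) := by
    have h3 : b + a * p ^ s * (p + 1) = a * p ^ s * (p + 1) + p ^ s * t * (p + 1) := by
      rw [hdeg, ← hc]; ring
    linarith
  have hps0 : 0 < p ^ s := Nat.pow_pos (by omega)
  have hps10 : 0 < p ^ (s - 1) := Nat.pow_pos (by omega)
  have hA : t * (p + 1) < p ^ m := by
    have h4 : p ^ s * (t * (p + 1)) < p ^ s * p ^ m := by
      rw [← hpow, ← mul_assoc, ← hb']; exact hlt
    exact Nat.lt_of_mul_lt_mul_left h4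
  have hss : p ^ s = p ^ (s - 1) * p := by
    rw [← pow_succ]; congr 1; omega
  have hX : p ^ m * p ≤ t * (p + 1) * p + p + 1 := by
    have h5 : p ^ (s - 1) * (p ^ m * p) ≤ p ^ (s - 1) * (t * (p + 1) * p + p + 1) := by
      calc p ^ (s - 1) * (p ^ m * p) = p ^ s * p ^ m := by rw [hss]; ring
        _ = p ^ n := hpow.symm
        _ ≤ b + p ^ s + p ^ (s - 1) := hge
        _ = p ^ (s - 1) * (t * (p + 1) * p + p + 1) := by rw [hb', hss]; ring
    exact Nat.le_of_mul_le_mul_left h5 hps10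
  have hkey : t * (p + 1) + 1 = p ^ m := by nlinarith [hA, hX]
  have heven : Even m := by
    by_contra hodd
    have hodd' : Odd m := Nat.not_even_iff_odd.mp hodd
    have hd1 : ((p : ℤ) + 1) ∣ (p : ℤ) ^ m + 1 := by
      simpa using Odd.add_dvd_pow_add_pow (p : ℤ) 1 hodd'
    have hd2 : ((p : ℤ) + 1) ∣ (p : ℤ) ^ m - 1 := by
      have heq : (p : ℤ) ^ m - 1 = ((p : ℤ) + 1) * t := by
        have h9 : ((t * (p + 1) + 1 : ℕ) : ℤ) = ((p ^ m : ℕ) : ℤ) := by rw [hkey]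
        push_cast at h9
        linarith
      exact ⟨t, heq⟩
    have hd3 : ((p : ℤ) + 1) ∣ 2 := by
      have := Int.dvd_sub hd1 hd2
      simpa using this
    have := Int.le_of_dvd (by norm_num) hd3
    omega
  have hbval : b + p ^ s = p ^ n := by
    have : p ^ s * (t * (p + 1) + 1) = p ^ s * p ^ m := by rw [hkey]
    rw [← hpow] at this
    calc b + p ^ s = p ^ s * (t * (p + 1) + 1) := by rw [hb']; ring
      _ = p ^ n := this
  have hat : a + t = p ^ m := by
    have h6 : p ^ s * (a + t) = p ^ s * p ^ m := by rw [← hpow, ← hc]; ring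
    exact Nat.eq_of_mul_eq_mul_left hps0 h6
  have haval : a * (p + 1) = p ^ (m + 1) + 1 := by
    have h7 : a * (p + 1) + t * (p + 1) = p ^ m * p + p ^ m := by
      rw [← add_mul, hat]; ring
    have h8 : p ^ (m + 1) = p ^ m * p := pow_succ p m
    linarith
  exact ⟨heven, hm1, by omega, haval⟩
end

section
/- Let p ≥ 3, t ≥ 1, n ≥ 2, s ≥ 1, a ≥ 1 be natural numbers and b a natural number with 1 ≤ b < p^n, p ∤ a, p^s ∣ b, b + p^s + p^{s−1} ≥ p^n, and b + a·p^s·(p+1) = t·p^n·(p+1). Then n − s is even and positive, b = p^n − p^s, and a·(p+1) = t·p^{n−s+1} + t·p^{n−s} − p^{n−s} + 1. -/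
theorem stmt_10 (p t n s a b : ℕ) (hp : 3 ≤ p) (ht : 1 ≤ t) (hn : 2 ≤ n)
    (hs : 1 ≤ s) (ha : 1 ≤ a) (hb1 : 1 ≤ b) (hlt : b < p ^ n)
    (hpa : ¬ p ∣ a) (hdvd : p ^ s ∣ b)
    (hge : p ^ n ≤ b + p ^ s + p ^ (s - 1))
    (hdeg : b + a * p ^ s * (p + 1) = t * p ^ n * (p + 1)) :
    Even (n - s) ∧ 0 < n - s ∧ b = p ^ n - p ^ s ∧
      a * (p + 1) = t * p ^ (n - s + 1) + t * p ^ (n - s) - p ^ (n - s) + 1 := by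
  obtain ⟨c, hc⟩ := hdvd
  have hp0 : 0 < p := by omega
  have hps : 0 < p ^ s := pow_pos hp0 s
  have hc1 : 1 ≤ c := by
    rcases Nat.eq_zero_or_pos c with h | h
    · rw [h, Nat.mul_zero] at hc; omega
    · exact h
  have hsn : s < n := by
    have h1 : p ^ s ≤ b := by
      rw [hc]; exact Nat.le_mul_of_pos_right _ hc1
    have h2 : p ^ s < p ^ n := lt_of_le_of_lt h1 hlt
    exact (Nat.pow_lt_pow_iff_right (by omega)).mp h2
  set k := n - s with hk
  have hk1 : 1 ≤ k := by omega
  have hnk : n = s + k := by omega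
  -- c < p^k
  have hclt : c < p ^ k := by
    have h1 : p ^ s * c < p ^ s * p ^ k := by
      rw [← pow_add, ← hnk, ← hc]; exact hlt
    exact Nat.lt_of_mul_lt_mul_left h1
  -- p^k ≤ c + 1
  have e0 : p ^ (s - 1) * p = p ^ s := by
    rw [← pow_succ]; congr 1; omega
  have hcge : p ^ k ≤ c + 1 := by
    have e1 : p ^ (s - 1) * (p * p ^ k) = p ^ n := by
      have h : s - 1 + 1 + k = n := by omega
      rw [← h, pow_add, pow_succ]; ring
    have e2 : p ^ (s - 1) * (p * c + p + 1) = p ^ s * c + p ^ s + p ^ (s - 1) := by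
      rw [show p ^ s = p ^ (s - 1) * p from e0.symm]; ring
    rw [hc] at hge
    have h1 : p ^ (s - 1) * (p * p ^ k) ≤ p ^ (s - 1) * (p * c + p + 1) := by
      rw [e1, e2]; exact hge
    have h2 : p * p ^ k ≤ p * c + p + 1 := Nat.le_of_mul_le_mul_left h1 (pow_pos hp0 _)
    have h3 : p * p ^ k < p * (c + 2) := by nlinarith
    have h4 := Nat.lt_of_mul_lt_mul_left h3
    omega
  have hcval : c + 1 = p ^ k := le_antisymm hclt hcge
  have hcZ : (c : ℤ) + 1 = (p : ℤ) ^ k := by exact_mod_cast hcval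
  -- key equation over ℤ
  have keyZ : (c : ℤ) + (a : ℤ) * ((p : ℤ) + 1) = (t : ℤ) * (p : ℤ) ^ k * ((p : ℤ) + 1) := by
    have hdZ : (p : ℤ) ^ s * c + (a : ℤ) * (p : ℤ) ^ s * ((p : ℤ) + 1)
        = (t : ℤ) * ((p : ℤ) ^ s * (p : ℤ) ^ k) * ((p : ℤ) + 1) := by
      have h := hdeg
      rw [hc, hnk, pow_add] at h
      exact_mod_cast h
    have hne : (p : ℤ) ^ s ≠ 0 := by positivity
    apply mul_left_cancel₀ hne
    linear_combination hdZ
  have hdvd2 : ((p : ℤ) + 1) ∣ (p : ℤ) ^ k - 1 :=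
    ⟨(t : ℤ) * (p : ℤ) ^ k - a, by linear_combination keyZ - hcZ⟩
  have heven : Even k := by
    rcases Nat.even_or_odd k with he | ho
    · exact he
    · exfalso
      have h0 : ((p : ℤ) + 1) ∣ (p : ℤ) - (-1) := ⟨1, by ring⟩
      have h1 : (p : ℤ) ≡ -1 [ZMOD ((p : ℤ) + 1)] :=
        (Int.modEq_iff_dvd.mpr h0).symm
      have h2 := h1.pow k
      rw [ho.neg_one_pow] at h2
      have h3 : (p : ℤ) ^ k ≡ 1 [ZMOD ((p : ℤ) + 1)] :=
        (Int.modEq_iff_dvd.mpr hdvd2).symm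
      have h4 : ((p : ℤ) + 1) ∣ 2 := by
        have h5 := Int.modEq_iff_dvd.mp (h2.symm.trans h3)
        norm_num at h5
        exact h5
      have h6 := Int.le_of_dvd (by norm_num) h4
      have : (p : ℤ) ≥ 3 := by exact_mod_cast hp
      omega
  refine ⟨heven, by omega, ?_, ?_⟩
  · have h1 : p ^ s ≤ p ^ n := Nat.pow_le_pow_right (by omega) (le_of_lt hsn)
    have hZ : (b : ℤ) = (p : ℤ) ^ n - (p : ℤ) ^ s := by
      have hbZ : (b : ℤ) = (p : ℤ) ^ s * c := by exact_mod_cast hc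
      rw [hbZ, hnk, pow_add]
      linear_combination (p : ℤ) ^ s * hcZ
    zify [h1]
    exact hZ
  · have h2 : p ^ k ≤ t * p ^ (k + 1) + t * p ^ k := by
      have : p ^ k ≤ t * p ^ k := Nat.le_mul_of_pos_left _ ht
      omega
    have hZ : (a : ℤ) * ((p : ℤ) + 1)
        = (t : ℤ) * (p : ℤ) ^ (k + 1) + (t : ℤ) * (p : ℤ) ^ k - (p : ℤ) ^ k + 1 := by
      rw [pow_succ]
      linear_combination keyZ - hcZ
    zify [h2]
    push_cast
    linear_combination hZ
end
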